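/- The group 𝒯 of tadpole matrices is (1/(2p²))-argument-submultiplicative: for all A, B ∈ 𝒯 and every eigenvalue γ of AB, there exist eigenvalues α of A and β of B such that (1/2π)|arg(αβ/γ)| ≤ 1/(2p²). -/

import Mathlib

/-!
The product of two tadpole matrices is again block diagonal: its tail is the entrywise product of
the tails, so tail eigenvalues of `AB` factor exactly, and its head is `diag(f) C^(k+l)` with
`∏ f = 1`. For `p` prime, `p ∤ m` and `∏ d = 1`, the head `diag(d) C^m` satisfies
`(diag(d) C^m)^p = 1` and is conjugate, by a diagonal matrix, to `ω • diag(d) C^m` for a primitive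
`p`-th root of unity `ω`; hence its spectrum is exactly the group of `p`-th roots of unity. This
settles the head eigenvalues when `p ∤ k + l` (pair `γ` with the eigenvalue `1` of the other
tail), and the case `p ∣ k`, `p ∣ l`, where both heads are diagonal, is exact. In the remaining
case `γ` lies within angle `π/p²` of some `ξ^n`, and `ξ^n` splits as the tail eigenvalue
`ξ^(jk + a_j p)` of `A` with `jk ≡ n (mod p)` times a `p`-th root of unity, which is a head
eigenvalue of `B`.
-/

open Matrix

/-- The `p × p` cyclic permutation matrix. -/
def cycleMatrix (p : ℕ) : Matrix (Fin p) (Fin p) ℂ :=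
  Matrix.of fun i j => if (j : ℕ) = ((i : ℕ) + 1) % p then 1 else 0

/-- The fixed primitive `p²`-th root of unity `ξ = e^{2πi/p²}`. -/
noncomputable def xi (p : ℕ) : ℂ := Complex.exp (2 * Real.pi * Complex.I / (p ^ 2))

/-- The tadpole matrix with head `D C^k` (where `D = diagonal d`) and tail
`diag(ξ^{0·k + a_0 p}, ξ^{1·k + a_1 p}, …, ξ^{(p-1)k + a_{p-1} p})`.
We index the `2p × 2p` matrix by `Fin p ⊕ Fin p`. -/
noncomputable def tadpole (p : ℕ) (d : Fin p → ℂ) (k : ℕ) (a : Fin p → ℕ) :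
    Matrix (Fin p ⊕ Fin p) (Fin p ⊕ Fin p) ℂ :=
  Matrix.fromBlocks (Matrix.diagonal d * cycleMatrix p ^ k) 0 0
    (Matrix.diagonal fun j : Fin p => xi p ^ ((j : ℕ) * k + a j * p))

/-- Membership in the set `𝒯` of tadpole matrices: `D` is unitary diagonal of
determinant one, `k ∈ {0, …, p-1}`, `a_j ∈ {0, …, p-1}` and `a_0 = 0` (so the first
tail entry is `1`). -/
def IsTadpole (p : ℕ) (A : Matrix (Fin p ⊕ Fin p) (Fin p ⊕ Fin p) ℂ) : Prop :=
  ∃ (d : Fin p → ℂ) (k : ℕ) (a : Fin p → ℕ),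
    (∀ i, ‖d i‖ = 1) ∧ (∏ i, d i = 1) ∧ k < p ∧ (∀ j, a j < p) ∧
    (∀ j : Fin p, (j : ℕ) = 0 → a j = 0) ∧ A = tadpole p d k a

open Real

namespace Complex

theorem abs_arg_exp_mul_I_le (θ : ℝ) : |arg (exp (θ * I))| ≤ |θ| := by
  by_cases hθ : θ ∈ Set.Ioc (-π) π
  · rw [exp_mul_I, arg_cos_add_sin_mul_I hθ]
  · refine (abs_arg_le_pi _).trans ?_
    rw [Set.mem_Ioc, not_and_or, not_lt, not_le] at hθ
    rcases hθ with h | h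
    · rw [abs_of_neg (by linarith [Real.pi_pos])]; linarith
    · rw [abs_of_pos (by linarith [Real.pi_pos])]; linarith

theorem exists_abs_arg_exp_pow_div_le {N : ℕ} (hN : 0 < N) (γ : ℂ) :
    ∃ n : ℕ, |arg (exp (2 * π * I / N) ^ n / γ)| ≤ π / N := by
  rcases eq_or_ne γ 0 with rfl | hγ
  · exact ⟨0, by simp; positivity⟩
  have hN' : (0 : ℝ) < N := by exact_mod_cast hN
  -- Shifting `arg γ` by `2π` makes the rounded index `n` below a natural number.
  set θ : ℝ := arg γ + 2 * π
  set x : ℝ := θ * N / (2 * π)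
  have hx : 0 ≤ x := by
    have : 0 ≤ θ := by linarith [neg_pi_lt_arg γ, Real.pi_pos]
    positivity
  set n := ⌊x + 1 / 2⌋₊
  have hn : |(n : ℝ) - x| ≤ 1 / 2 := by
    have h1 := Nat.floor_le (by linarith : 0 ≤ x + 1 / 2)
    have h2 := Nat.lt_floor_add_one (x + 1 / 2)
    rw [abs_le]; constructor <;> linarith
  refine ⟨n, ?_⟩
  have hγ' : γ = ‖γ‖ * exp (θ * I) := by
    rw [ofReal_add, add_mul, exp_add, ofReal_mul, ofReal_ofNat, exp_two_pi_mul_I, mul_one,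
      norm_mul_exp_arg_mul_I]
  have hquot : exp (2 * π * I / N) ^ n / γ
      = exp ((2 * π * n / N - θ : ℝ) * I) * (‖γ‖⁻¹ : ℝ) := by
    conv_lhs => rw [← exp_nat_mul, hγ', div_mul_eq_div_div_swap, ← exp_sub]
    rw [ofReal_inv, div_eq_mul_inv]
    congr 2
    push_cast
    ring
  rw [hquot, arg_mul_real (by positivity)]
  refine (abs_arg_exp_mul_I_le _).trans ?_
  calc |2 * π * n / N - θ| = 2 * π / N * |(n : ℝ) - x| := by
        rw [← abs_of_pos (by positivity : 0 < 2 * π / N), ← abs_mul]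
        congr 1
        simp only [x]
        field_simp
    _ ≤ 2 * π / N * (1 / 2) := by gcongr
    _ = π / N := by ring

end Complex

open Complex Fin.CommRing

theorem spectrum.pow_eq_one_of_mem {𝕜 A : Type*} [Field 𝕜] [Ring A] [Algebra 𝕜 A] [Nontrivial A]
    {a : A} {n : ℕ} (ha : a ^ n = 1) {ζ : 𝕜} (hζ : ζ ∈ spectrum 𝕜 a) : ζ ^ n = 1 := by
  simpa [ha, spectrum.one_eq] using spectrum.pow_mem_pow a n hζ

theorem IsPrimitiveRoot.mem_of_forall_mul_mem {K : Type*} [Field K] {n : ℕ} [NeZero n]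
    {ω : K} (hω : IsPrimitiveRoot ω n) {S : Set K} (hS : S.Nonempty)
    (hpow : ∀ x ∈ S, x ^ n = 1) (hmul : ∀ x ∈ S, ω * x ∈ S) {ζ : K} (hζ : ζ ^ n = 1) :
    ζ ∈ S := by
  obtain ⟨x, hx⟩ := hS
  have hx0 : x ≠ 0 := by
    rintro rfl
    simpa [zero_pow (NeZero.ne n)] using hpow 0 hx
  obtain ⟨s, -, hs⟩ :=
    hω.eq_pow_of_pow_eq_one (ξ := ζ / x) (by rw [div_pow, hζ, hpow x hx, div_one])
  have hpow_mul : ∀ t : ℕ, ω ^ t * x ∈ S := by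
    intro t
    induction t with
    | zero => simpa using hx
    | succ t ih => simpa [pow_succ', mul_assoc] using hmul _ ih
  simpa [hs, hx0] using hpow_mul s

section CycleMatrix

variable {p : ℕ} [NeZero p]

theorem cycleMatrix_apply (i j : Fin p) : cycleMatrix p i j = if j = i + 1 then 1 else 0 := by
  simp only [cycleMatrix, of_apply, Fin.ext_iff, Fin.val_add, Fin.val_one', Nat.add_mod_mod]

theorem cycleMatrix_pow_apply (k : ℕ) (i j : Fin p) :
    (cycleMatrix p ^ k) i j = if j = i + k then 1 else 0 := by
  induction k generalizing j with
  | zero => simp [one_apply, eq_comm]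
  | succ k ih =>
    simp only [pow_succ, mul_apply, ih, ite_mul, one_mul, zero_mul, Finset.sum_ite_eq',
      Finset.mem_univ, if_true, cycleMatrix_apply, Nat.cast_succ, add_assoc]

theorem cycleMatrix_pow_mul_diagonal (k : ℕ) (e : Fin p → ℂ) :
    cycleMatrix p ^ k * diagonal e = diagonal (fun i => e (i + k)) * cycleMatrix p ^ k := by
  ext i j
  rw [mul_diagonal, diagonal_mul, cycleMatrix_pow_apply]
  split_ifs with h <;> simp [h]

theorem cycleMatrix_pow_eq_one {n : ℕ} (hn : p ∣ n) : cycleMatrix p ^ n = 1 := by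
  ext i j
  simp [cycleMatrix_pow_apply, Fin.natCast_eq_zero.2 hn, one_apply, eq_comm]

end CycleMatrix

def weightedShift (p : ℕ) (d : Fin p → ℂ) (m : ℕ) : Matrix (Fin p) (Fin p) ℂ :=
  diagonal d * cycleMatrix p ^ m

section WeightedShift

variable {p : ℕ} [NeZero p]

theorem weightedShift_of_dvd (d : Fin p → ℂ) {m : ℕ} (hm : p ∣ m) :
    weightedShift p d m = diagonal d := by
  rw [weightedShift, cycleMatrix_pow_eq_one hm, mul_one]

theorem weightedShift_mul_weightedShift (d e : Fin p → ℂ) (k l : ℕ) :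
    weightedShift p d k * weightedShift p e l
      = weightedShift p (fun i => d i * e (i + k)) (k + l) := by
  rw [weightedShift, weightedShift, mul_assoc, ← mul_assoc (_ ^ k), cycleMatrix_pow_mul_diagonal,
    mul_assoc, ← mul_assoc, diagonal_mul_diagonal, ← pow_add, weightedShift]

theorem weightedShift_pow (d : Fin p → ℂ) (m t : ℕ) :
    weightedShift p d m ^ t
      = weightedShift p (fun i => ∏ s ∈ Finset.range t, d (i + (s * m : ℕ))) (t * m) := by
  induction t with
  | zero => simp [weightedShift]
  | succ t ih =>
    rw [pow_succ, ih, weightedShift_mul_weightedShift, Nat.succ_mul]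
    simp only [Finset.prod_range_succ]

end WeightedShift

section PrimeOrder

variable {p : ℕ} [Fact p.Prime]

theorem Fin.prod_add_mul {M : Type*} [CommMonoid M] {c : Fin p} (hc : c ≠ 0)
    (f : Fin p → M) (i : Fin p) : ∏ s : Fin p, f (i + s * c) = ∏ s, f s := by
  refine Fintype.prod_bijective _ (Finite.injective_iff_bijective.mp fun s t hst => ?_) _ _
    fun _ => rfl
  apply (ZMod.finEquiv p).injective
  have := congrArg (ZMod.finEquiv p) hst
  simp only [map_add, map_mul, add_right_inj] at this
  exact mul_right_cancel₀ ((map_ne_zero_iff _ (ZMod.finEquiv p).injective).2 hc) this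

theorem weightedShift_pow_self {d : Fin p → ℂ} (hd : ∏ i, d i = 1) {m : ℕ} (hm : ¬ p ∣ m) :
    weightedShift p d m ^ p = 1 := by
  rw [weightedShift_pow, weightedShift_of_dvd _ (dvd_mul_right p m), ← diagonal_one]
  congr 1
  funext i
  rw [← Fin.prod_univ_eq_prod_range (fun s => d (i + (s * m : ℕ)))]
  simpa using Fin.prod_add_mul (c := m) (by simpa using hm) d i |>.trans hd

theorem spectrum_smul_weightedShift (d : Fin p → ℂ) {m : ℕ} (hm : ¬ p ∣ m) {ω : ℂ}
    (hω : ω ^ p = 1) : spectrum ℂ (ω • weightedShift p d m) = spectrum ℂ (weightedShift p d m) := by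
  have hm' : (m : ZMod p) ≠ 0 := by rwa [Ne, ZMod.natCast_eq_zero_iff]
  set ψ := AddChar.zmodChar p hω
  -- `w i = ω ^ (i / m)`, the quotient taken in `ZMod p`.
  set w : Fin p → ℂ := fun i => ψ (ZMod.finEquiv p i * (m : ZMod p)⁻¹)
  have hw : ∀ i, w (i + m) = ω * w i := by
    intro i
    have hψ1 : ψ 1 = ω := by simpa using AddChar.zmodChar_apply' hω 1
    simp only [w, map_add, map_natCast, add_mul, mul_inv_cancel₀ hm', AddChar.map_add_eq_mul, hψ1,
      mul_comm ω]
  have hω0 : ω ≠ 0 := by rintro rfl; simp [zero_pow (NeZero.ne p)] at hω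
  obtain ⟨U, hU⟩ : IsUnit (diagonal w) :=
    isUnit_diagonal.2 (Pi.isUnit_iff.2 fun i => isUnit_iff_ne_zero.2 (pow_ne_zero _ hω0))
  have hMW : weightedShift p d m * diagonal w = ω • (diagonal w * weightedShift p d m) := by
    rw [weightedShift, mul_assoc, cycleMatrix_pow_mul_diagonal, ← mul_assoc, diagonal_mul_diagonal,
      ← mul_assoc, diagonal_mul_diagonal, ← smul_mul, ← diagonal_smul]
    congr 2
    funext i
    simp only [hw, Pi.smul_apply, smul_eq_mul]
    ring
  have hconj : (↑U⁻¹ : Matrix (Fin p) (Fin p) ℂ) * weightedShift p d m * U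
      = ω • weightedShift p d m := by
    rw [mul_assoc, hU, hMW, mul_smul_comm, ← mul_assoc, ← hU, U.inv_mul, one_mul]
  rw [← hconj, spectrum.units_conjugate']

theorem mem_spectrum_weightedShift_iff {d : Fin p → ℂ} (hd : ∏ i, d i = 1) {m : ℕ}
    (hm : ¬ p ∣ m) {ζ : ℂ} : ζ ∈ spectrum ℂ (weightedShift p d m) ↔ ζ ^ p = 1 := by
  have hpow := weightedShift_pow_self hd hm
  refine ⟨spectrum.pow_eq_one_of_mem hpow, fun hζ => ?_⟩
  have hω := Complex.isPrimitiveRoot_exp p (NeZero.ne p)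
  refine hω.mem_of_forall_mul_mem (spectrum.nonempty_of_isAlgClosed_of_finiteDimensional ℂ _)
    (fun x hx => spectrum.pow_eq_one_of_mem hpow hx) (fun x hx => ?_) hζ
  rw [← spectrum_smul_weightedShift d hm hω.pow_eq_one]
  simpa using (spectrum.smul_mem_smul_iff (r := (hω.isUnit (NeZero.ne p)).unit)).2 hx

end PrimeOrder

theorem Matrix.spectrum_fromBlocks_zero {K m n : Type*} [Field K] [Fintype m] [Fintype n]
    [DecidableEq m] [DecidableEq n] (A : Matrix m m K) (D : Matrix n n K) :
    spectrum K (fromBlocks A 0 0 D) = spectrum K A ∪ spectrum K D := by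
  ext μ
  simp only [Set.mem_union, mem_spectrum_iff_isRoot_charpoly, charpoly_fromBlocks_zero₁₂,
    Polynomial.IsRoot.def, Polynomial.eval_mul, mul_eq_zero]

theorem isPrimitiveRoot_xi (p : ℕ) [NeZero p] : IsPrimitiveRoot (xi p) (p ^ 2) := by
  simpa [xi] using Complex.isPrimitiveRoot_exp (p ^ 2) (pow_ne_zero 2 (NeZero.ne p))

theorem exists_mul_pow_eq_one_eq_xi_pow {p : ℕ} [Fact p.Prime] {k : ℕ} (hk : ¬ p ∣ k)
    (a : Fin p → ℕ) (n : ℕ) :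
    ∃ j : Fin p, ∃ β : ℂ, β ^ p = 1 ∧ xi p ^ ((j : ℕ) * k + a j * p) * β = xi p ^ n := by
  have hξ := isPrimitiveRoot_xi p
  have hξ0 : xi p ≠ 0 := hξ.ne_zero (pow_ne_zero 2 (NeZero.ne p))
  have hk' : (k : ZMod p) ≠ 0 := by rwa [Ne, ZMod.natCast_eq_zero_iff]
  set x : ZMod p := n * (k : ZMod p)⁻¹
  set j : Fin p := ⟨x.val, x.val_lt⟩
  set E := (j : ℕ) * k + a j * p
  have hE : E % p = n % p := by
    rw [← ZMod.natCast_eq_natCast_iff']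
    simp [E, j, x, hk']
  have hξp : (xi p ^ p) ^ p = 1 := by rw [← pow_mul, ← sq, hξ.pow_eq_one]
  refine ⟨j, xi p ^ n / xi p ^ E, ?_, mul_div_cancel₀ _ (pow_ne_zero _ hξ0)⟩
  rw [div_pow, ← pow_mul, ← pow_mul, mul_comm n, mul_comm E, pow_mul, pow_mul,
    pow_eq_pow_mod n hξp, pow_eq_pow_mod E hξp, hE, div_self (pow_ne_zero _ (pow_ne_zero _ hξ0))]

theorem spectrum_tadpole (p : ℕ) (d : Fin p → ℂ) (k : ℕ) (a : Fin p → ℕ) :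
    spectrum ℂ (tadpole p d k a) = spectrum ℂ (weightedShift p d k) ∪
      Set.range fun j : Fin p => xi p ^ ((j : ℕ) * k + a j * p) := by
  rw [tadpole, spectrum_fromBlocks_zero, spectrum_diagonal, weightedShift]

theorem spectrum_weightedShift_subset_tadpole {p : ℕ} (d : Fin p → ℂ) (k : ℕ) (a : Fin p → ℕ) :
    spectrum ℂ (weightedShift p d k) ⊆ spectrum ℂ (tadpole p d k a) := by
  rw [spectrum_tadpole]
  exact Set.subset_union_left

theorem xi_pow_mem_spectrum_tadpole {p : ℕ} (d : Fin p → ℂ) (k : ℕ) (a : Fin p → ℕ) (j : Fin p) :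
    xi p ^ ((j : ℕ) * k + a j * p) ∈ spectrum ℂ (tadpole p d k a) := by
  rw [spectrum_tadpole]
  exact Or.inr ⟨j, rfl⟩

section Tadpole

variable {p : ℕ} [NeZero p]

theorem tadpole_mul (d e : Fin p → ℂ) (k l : ℕ) (a b : Fin p → ℕ) :
    tadpole p d k a * tadpole p e l b
      = fromBlocks (weightedShift p (fun i => d i * e (i + k)) (k + l)) 0 0
          (diagonal fun j : Fin p =>
            xi p ^ ((j : ℕ) * k + a j * p) * xi p ^ ((j : ℕ) * l + b j * p)) := by
  rw [tadpole, tadpole, fromBlocks_multiply, ← weightedShift_mul_weightedShift]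
  simp [weightedShift, diagonal_mul_diagonal]

theorem one_mem_spectrum_tadpole (d : Fin p → ℂ) (k : ℕ) {a : Fin p → ℕ} (ha : a 0 = 0) :
    1 ∈ spectrum ℂ (tadpole p d k a) := by
  simpa [ha] using xi_pow_mem_spectrum_tadpole d k a 0

end Tadpole

section PrimeTadpole

variable {p : ℕ} [Fact p.Prime] {d e : Fin p → ℂ} {k l : ℕ} {a b : Fin p → ℕ}

theorem exists_mul_eq_of_not_dvd_add (hd : ∏ i, d i = 1) (he : ∏ i, e i = 1) (ha : a 0 = 0)
    (hb : b 0 = 0) (hkl : ¬ p ∣ k + l) {γ : ℂ} (hγ : γ ^ p = 1) :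
    ∃ α ∈ spectrum ℂ (tadpole p d k a), ∃ β ∈ spectrum ℂ (tadpole p e l b), α * β = γ := by
  by_cases hk : p ∣ k
  · have hl : ¬ p ∣ l := fun hl => hkl (dvd_add hk hl)
    exact ⟨1, one_mem_spectrum_tadpole d k ha, γ, spectrum_weightedShift_subset_tadpole e l b
      ((mem_spectrum_weightedShift_iff he hl).2 hγ), one_mul γ⟩
  · exact ⟨γ, spectrum_weightedShift_subset_tadpole d k a
      ((mem_spectrum_weightedShift_iff hd hk).2 hγ), 1, one_mem_spectrum_tadpole e l hb, mul_one γ⟩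

theorem exists_abs_arg_le_of_not_dvd (he : ∏ i, e i = 1) (hk : ¬ p ∣ k) (hl : ¬ p ∣ l) (γ : ℂ) :
    ∃ α ∈ spectrum ℂ (tadpole p d k a), ∃ β ∈ spectrum ℂ (tadpole p e l b),
      |arg (α * β / γ)| ≤ π / p ^ 2 := by
  obtain ⟨n, hn⟩ := exists_abs_arg_exp_pow_div_le (pow_pos (NeZero.pos p) 2) γ
  obtain ⟨j, β, hβ, hαβ⟩ := exists_mul_pow_eq_one_eq_xi_pow hk a n
  refine ⟨_, xi_pow_mem_spectrum_tadpole d k a j, β, spectrum_weightedShift_subset_tadpole e l b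
    ((mem_spectrum_weightedShift_iff he hl).2 hβ), ?_⟩
  rw [hαβ]
  simpa [xi] using hn

theorem exists_abs_arg_le_of_mem_spectrum_weightedShift (hd : ∏ i, d i = 1)
    (he : ∏ i, e i = 1) (ha : a 0 = 0) (hb : b 0 = 0) {γ : ℂ}
    (hγ : γ ∈ spectrum ℂ (weightedShift p (fun i => d i * e (i + k)) (k + l))) :
    ∃ α ∈ spectrum ℂ (tadpole p d k a), ∃ β ∈ spectrum ℂ (tadpole p e l b),
      |arg (α * β / γ)| ≤ π / p ^ 2 := by
  have hexact : ∀ {α β : ℂ}, α * β = γ → |arg (α * β / γ)| ≤ π / p ^ 2 := fun h => by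
    rw [h, arg_div_self, abs_zero]
    positivity
  by_cases hkl : p ∣ k + l
  · by_cases hk : p ∣ k
    · have hl : p ∣ l := (Nat.dvd_add_right hk).1 hkl
      rw [weightedShift_of_dvd _ hkl, spectrum_diagonal] at hγ
      obtain ⟨i, rfl⟩ := hγ
      refine ⟨d i, spectrum_weightedShift_subset_tadpole d k a ?_,
        e (i + k), spectrum_weightedShift_subset_tadpole e l b ?_, hexact rfl⟩
      · simp [weightedShift_of_dvd _ hk]
      · simp [weightedShift_of_dvd _ hl]
    · exact exists_abs_arg_le_of_not_dvd he hk (fun hl => hk ((Nat.dvd_add_left hl).1 hkl)) γ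
  · have hf : ∏ i, d i * e (i + k) = 1 := by
      rw [Finset.prod_mul_distrib, hd, one_mul, ← he]
      exact Fintype.prod_equiv (Equiv.addRight (k : Fin p)) _ _ fun _ => rfl
    obtain ⟨α, hα, β, hβ, hαβ⟩ := exists_mul_eq_of_not_dvd_add hd he ha hb hkl
      ((mem_spectrum_weightedShift_iff hf hkl).1 hγ)
    exact ⟨α, hα, β, hβ, hexact hαβ⟩

end PrimeTadpole

theorem tadpole_group_argument_submultiplicative_general (p : ℕ) (hp : p.Prime)
    (A B : Matrix (Fin p ⊕ Fin p) (Fin p ⊕ Fin p) ℂ)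
    (hA : IsTadpole p A) (hB : IsTadpole p B)
    (γ : ℂ) (hγ : γ ∈ spectrum ℂ (A * B)) :
    ∃ α ∈ spectrum ℂ A, ∃ β ∈ spectrum ℂ B,
      1 / (2 * Real.pi) * |Complex.arg (α * β / γ)| ≤ 1 / (2 * (p : ℝ) ^ 2) := by
  have := Fact.mk hp
  obtain ⟨d, k, a, -, hd, -, -, ha, rfl⟩ := hA
  obtain ⟨e, l, b, -, he, -, -, hb, rfl⟩ := hB
  suffices ∃ α ∈ spectrum ℂ (tadpole p d k a), ∃ β ∈ spectrum ℂ (tadpole p e l b),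
      |arg (α * β / γ)| ≤ π / p ^ 2 by
    obtain ⟨α, hα, β, hβ, hle⟩ := this
    refine ⟨α, hα, β, hβ, ?_⟩
    calc 1 / (2 * π) * |arg (α * β / γ)| ≤ 1 / (2 * π) * (π / p ^ 2) := by gcongr
      _ = 1 / (2 * (p : ℝ) ^ 2) := by field_simp
  rw [tadpole_mul, spectrum_fromBlocks_zero, spectrum_diagonal] at hγ
  rcases hγ with hγ | ⟨j, rfl⟩
  · exact exists_abs_arg_le_of_mem_spectrum_weightedShift hd he (ha 0 rfl) (hb 0 rfl) hγ
  · refine ⟨_, xi_pow_mem_spectrum_tadpole d k a j, _, xi_pow_mem_spectrum_tadpole e l b j, ?_⟩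
    simp only [arg_div_self, abs_zero]
    positivity

/-- The group `𝒯` of tadpole matrices is `1/(2p²)`-argument-submultiplicative:
for all `A, B ∈ 𝒯` and every eigenvalue `γ` of `AB`, there exist eigenvalues `α` of
`A` and `β` of `B` with `(1/2π)|arg(αβ/γ)| ≤ 1/(2p²)`. -/
theorem tadpole_group_argument_submultiplicative (p : ℕ) (hp : p.Prime) (hodd : Odd p)
    (A B : Matrix (Fin p ⊕ Fin p) (Fin p ⊕ Fin p) ℂ)
    (hA : IsTadpole p A) (hB : IsTadpole p B)
    (γ : ℂ) (hγ : γ ∈ spectrum ℂ (A * B)) :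
    ∃ α ∈ spectrum ℂ A, ∃ β ∈ spectrum ℂ B,
      1 / (2 * Real.pi) * |Complex.arg (α * β / γ)| ≤ 1 / (2 * (p : ℝ) ^ 2) :=
  tadpole_group_argument_submultiplicative_general p hp A B hA hB γ hγ
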